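/- Let X1, X2, X3 be three non-collinear points in the hyperbolic plane and w > 0. The location of the center of mass of the system {(X1,w), (X2,w), (X3,w)} is the point of intersection of the three medians of triangle X1X2X3. -/

import Mathlib

open Real UpperHalfPlane

noncomputable section

/-- `Z` lies on the geodesic segment from `X` to `Y` (hyperbolic betweenness). -/
def HBtw (X Z Y : ℍ) : Prop := dist X Z + dist Z Y = dist X Y

/-- `(Z, z)` is the hyperbolic centroid of the point-masses `(X, x)` and `(Y, y)`:
`Z` lies between `X` and `Y`, the moments about `Z` balance, and
`z = x·cosh d(X,Z) + y·cosh d(Y,Z)`. -/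
def IsCentroid (X : ℍ) (x : ℝ) (Y : ℍ) (y : ℝ) (Z : ℍ) (z : ℝ) : Prop :=
  HBtw X Z Y ∧ x * Real.sinh (dist X Z) = y * Real.sinh (dist Y Z) ∧
    z = x * Real.cosh (dist X Z) + y * Real.cosh (dist Y Z)

/-- `(C, c)` is the center of mass of the finite point-mass system
`(X i, x i), i = 0, …, n`, obtained by iterating the binary centroid operation. -/
def IsSystemCentroid : {n : ℕ} → (Fin (n + 1) → ℍ) → (Fin (n + 1) → ℝ) → ℍ → ℝ → Prop
  | 0, X, x, C, c => C = X 0 ∧ c = x 0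
  | n + 1, X, x, C, c => ∃ C' c', IsSystemCentroid (Fin.init X) (Fin.init x) C' c' ∧
      IsCentroid C' c' (X (Fin.last (n + 1))) (x (Fin.last (n + 1))) C c

/-- `M` is the hyperbolic midpoint of `A` and `B`. -/
def HMidpoint (A B M : ℍ) : Prop := HBtw A M B ∧ dist A M = dist M B

/-!
Map `ℍ` to the hyperboloid model by `v = toHyperboloid`, so that the Minkowski form satisfies
`⟪v z, v w⟫ = -cosh d(z, w)`. Then `Z` lies between `X` and `Y` exactly when a positive
multiple of `v Z` is a nonnegative combination of `v X` and `v Y`, and the centroid `(Z, z)` of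
`(X, x)` and `(Y, y)` satisfies `z • v Z = x • v X + y • v Y`. So the center of mass `(C, c)` of a
system has `c • v C = ∑ xᵢ • v Xᵢ`. For three equal masses, `v X₂ + v X₃` is a positive multiple of
`v M₁`, so `c • v C` is a positive combination of `v X₁` and `v M₁`, and `C` lies on that median.
-/

def minkowski : LinearMap.BilinForm ℝ (Fin 3 → ℝ) :=
  Matrix.toBilin' (Matrix.diagonal ![-1, 1, 1])

theorem minkowski_apply (u v : Fin 3 → ℝ) :
    minkowski u v = -(u 0 * v 0) + u 1 * v 1 + u 2 * v 2 := by
  simp [minkowski, Matrix.toBilin'_apply', dotProduct, Fin.sum_univ_three, Matrix.mulVec_diagonal]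

theorem eq_zero_of_minkowski_self_eq_zero_of_orthogonal {u w : Fin 3 → ℝ}
    (hu : minkowski u u < 0) (hwu : minkowski w u = 0) (hww : minkowski w w = 0) : w = 0 := by
  rw [minkowski_apply] at hu hwu hww
  have htimelike : 0 < u 0 ^ 2 - u 1 ^ 2 - u 2 ^ 2 := by linarith
  have hlagrange :
      w 0 ^ 2 * (u 0 ^ 2 - u 1 ^ 2 - u 2 ^ 2) = -(w 1 * u 2 - w 2 * u 1) ^ 2 := by
    linear_combination (-(w 0 * u 0) - w 1 * u 1 - w 2 * u 2) * hwu + (u 1 ^ 2 + u 2 ^ 2) * hww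
  have hw0 : w 0 ^ 2 = 0 := by
    refine le_antisymm (nonpos_of_mul_nonpos_left ?_ htimelike) (sq_nonneg _)
    rw [hlagrange]
    exact neg_nonpos.mpr (sq_nonneg _)
  obtain ⟨hw1, hw2⟩ : w 1 ^ 2 = 0 ∧ w 2 ^ 2 = 0 := by
    constructor <;> nlinarith [sq_nonneg (w 1), sq_nonneg (w 2)]
  simp only [sq_eq_zero_iff] at hw0 hw1 hw2
  ext i
  fin_cases i
  exacts [hw0, hw1, hw2]

def toHyperboloid (z : ℍ) : Fin 3 → ℝ :=
  ![(z.re ^ 2 + z.im ^ 2 + 1) / (2 * z.im), z.re / z.im, (z.re ^ 2 + z.im ^ 2 - 1) / (2 * z.im)]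

theorem minkowski_toHyperboloid (z w : ℍ) :
    minkowski (toHyperboloid z) (toHyperboloid w) = -cosh (dist z w) := by
  have hz := z.im_pos
  have hw := w.im_pos
  rw [UpperHalfPlane.cosh_dist, Complex.dist_eq_re_im, Real.sq_sqrt (by positivity),
    minkowski_apply]
  simp only [toHyperboloid, Matrix.cons_val_zero, Matrix.cons_val_one, Matrix.cons_val_two,
    Matrix.head_cons, Matrix.tail_cons, coe_re, coe_im]
  field_simp
  ring

theorem HBtw.sinh_smul_toHyperboloid {X Z Y : ℍ} (h : HBtw X Z Y) :
    sinh (dist X Y) • toHyperboloid Z =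
      sinh (dist Z Y) • toHyperboloid X + sinh (dist X Z) • toHyperboloid Y := by
  set W := sinh (dist X Y) • toHyperboloid Z - sinh (dist Z Y) • toHyperboloid X -
    sinh (dist X Z) • toHyperboloid Y with hW
  have hdist : dist X Y = dist X Z + dist Z Y := h.symm
  have hpa := cosh_sq_sub_sinh_sq (dist X Z)
  have hpb := cosh_sq_sub_sinh_sq (dist Z Y)
  have hWX : minkowski W (toHyperboloid X) = 0 := by
    simp only [hW, map_sub, map_smul, LinearMap.sub_apply, LinearMap.smul_apply, smul_eq_mul,
      minkowski_toHyperboloid, dist_self, dist_comm Z X, dist_comm Y X, hdist, cosh_add,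
      sinh_add, cosh_zero]
    linear_combination (-sinh (dist Z Y)) * hpa
  have hWW : minkowski W W = 0 := by
    simp only [hW, map_sub, map_smul, LinearMap.sub_apply, LinearMap.smul_apply, smul_eq_mul,
      minkowski_toHyperboloid, dist_self, dist_comm Z X, dist_comm Y X, dist_comm Y Z, hdist,
      cosh_add, sinh_add, cosh_zero]
    linear_combination sinh (dist X Z) ^ 2 * hpb + sinh (dist Z Y) ^ 2 * hpa
  have hX : minkowski (toHyperboloid X) (toHyperboloid X) < 0 := by
    rw [minkowski_toHyperboloid, dist_self, cosh_zero]
    norm_num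
  have hW0 := eq_zero_of_minkowski_self_eq_zero_of_orthogonal hX hWX hWW
  rwa [hW, sub_sub, sub_eq_zero] at hW0

theorem hBtw_of_smul_toHyperboloid_eq_add {X Y Z : ℍ} {α β N : ℝ} (hα : 0 ≤ α) (hβ : 0 ≤ β)
    (hN : 0 < N) (h : N • toHyperboloid Z = α • toHyperboloid X + β • toHyperboloid Y) :
    HBtw X Z Y := by
  have pairX := congrArg (fun u => minkowski u (toHyperboloid X)) h
  have pairY := congrArg (fun u => minkowski u (toHyperboloid Y)) h
  have pairSelf := congrArg (fun u => minkowski u u) h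
  simp only [map_add, map_smul, LinearMap.add_apply, LinearMap.smul_apply, smul_eq_mul,
    minkowski_toHyperboloid, dist_self, cosh_zero, dist_comm Z X, dist_comm Y X]
    at pairX pairY pairSelf
  set D := cosh (dist X Y)
  have hsD : sinh (dist X Y) ^ 2 = D ^ 2 - 1 := by rw [sinh_sq]
  have sinh_eq_of_cosh_eq {a A B : ℝ} (hA : 0 ≤ A) (hB : N * cosh a = B)
      (hAB : A ^ 2 = B ^ 2 - N ^ 2) (ha : 0 ≤ a) : N * sinh a = A := by
    refine (pow_left_inj₀ (by positivity) hA two_ne_zero).mp ?_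
    rw [mul_pow, sinh_sq]
    linear_combination (N * cosh a + B) * hB - hAB
  have hsX : N * sinh (dist X Z) = β * sinh (dist X Y) :=
    sinh_eq_of_cosh_eq (B := α + β * D) (by positivity) (by linear_combination -pairX)
      (by linear_combination β ^ 2 * hsD - pairSelf) dist_nonneg
  have hsY : N * sinh (dist Z Y) = α * sinh (dist X Y) :=
    sinh_eq_of_cosh_eq (B := β + α * D) (by positivity) (by linear_combination -pairY)
      (by linear_combination α ^ 2 * hsD - pairSelf) dist_nonneg
  have hcosh : N ^ 2 * cosh (dist X Z + dist Z Y) = N ^ 2 * D := by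
    rw [cosh_add]
    linear_combination (-N * cosh (dist Z Y)) * pairX + (α + β * D) * (-pairY)
      + N * sinh (dist Z Y) * hsX + β * sinh (dist X Y) * hsY + α * β * hsD + D * pairSelf
  exact cosh_strictMonoOn.injOn (Set.mem_Ici.mpr (by positivity)) (Set.mem_Ici.mpr dist_nonneg)
    (mul_left_cancel₀ (by positivity) hcosh)

theorem IsCentroid.smul_toHyperboloid {X Y Z : ℍ} {x y z : ℝ} (h : IsCentroid X x Y y Z z) :
    z • toHyperboloid Z = x • toHyperboloid X + y • toHyperboloid Y := by
  obtain ⟨hbtw, hbal, rfl⟩ := h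
  have hdist : dist X Y = dist X Z + dist Z Y := hbtw.symm
  rcases eq_or_ne (sinh (dist X Y)) 0 with hs | hs
  · have hXY : dist X Z = 0 ∧ dist Z Y = 0 := by
      rw [sinh_eq_zero, hdist] at hs
      constructor <;> linarith [dist_nonneg (x := X) (y := Z), dist_nonneg (x := Z) (y := Y)]
    obtain ⟨rfl, rfl⟩ : X = Z ∧ Z = Y := ⟨dist_eq_zero.mp hXY.1, dist_eq_zero.mp hXY.2⟩
    simp only [dist_self, cosh_zero, mul_one, add_smul]
  · refine smul_right_injective _ hs ?_
    rw [dist_comm Y Z] at hbal ⊢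
    beta_reduce
    rw [smul_comm, hbtw.sinh_smul_toHyperboloid, smul_add, smul_smul, smul_smul, smul_add,
      smul_smul, smul_smul, hdist, sinh_add]
    congr 2
    · linear_combination (-cosh (dist Z Y)) * hbal
    · linear_combination cosh (dist X Z) * hbal

theorem IsCentroid.mass_pos {X Y Z : ℍ} {x y z : ℝ} (hx : 0 < x) (hy : 0 < y)
    (h : IsCentroid X x Y y Z z) : 0 < z := by
  rw [h.2.2]
  positivity

theorem IsSystemCentroid.smul_toHyperboloid {n : ℕ} {X : Fin (n + 1) → ℍ} {x : Fin (n + 1) → ℝ}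
    {C : ℍ} {c : ℝ} (h : IsSystemCentroid X x C c) :
    c • toHyperboloid C = ∑ i, x i • toHyperboloid (X i) := by
  induction n generalizing C c with
  | zero =>
    obtain ⟨rfl, rfl⟩ := h
    simp
  | succ n ih =>
    obtain ⟨C', c', hC', hcent⟩ := h
    rw [hcent.smul_toHyperboloid, ih hC']
    exact (Fin.sum_univ_castSucc fun i => x i • toHyperboloid (X i)).symm

theorem IsSystemCentroid.mass_pos {n : ℕ} {X : Fin (n + 1) → ℍ} {x : Fin (n + 1) → ℝ}
    {C : ℍ} {c : ℝ} (hx : ∀ i, 0 < x i) (h : IsSystemCentroid X x C c) : 0 < c := by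
  induction n generalizing C c with
  | zero =>
    obtain ⟨-, rfl⟩ := h
    exact hx 0
  | succ n ih =>
    obtain ⟨C', c', hC', hcent⟩ := h
    exact hcent.mass_pos (ih (fun i => hx _) hC') (hx _)

theorem HMidpoint.isCentroid {X Y M : ℍ} (h : HMidpoint X Y M) :
    IsCentroid X 1 Y 1 M (2 * cosh (dist X M)) := by
  obtain ⟨hbtw, hdist⟩ := h
  refine ⟨hbtw, ?_, ?_⟩ <;> rw [dist_comm Y M, ← hdist]
  ring

theorem HMidpoint.hBtw_of_smul_toHyperboloid_eq {A B D M C : ℍ} {a w c : ℝ}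
    (hM : HMidpoint B D M) (ha : 0 ≤ a) (hw : 0 < w) (hc : 0 < c)
    (h : c • toHyperboloid C = a • toHyperboloid A + w • toHyperboloid B + w • toHyperboloid D) :
    HBtw A C M := by
  refine hBtw_of_smul_toHyperboloid_eq_add (β := w * (2 * cosh (dist B M))) ha (by positivity) hc ?_
  rw [h, mul_smul, hM.isCentroid.smul_toHyperboloid, one_smul, one_smul, smul_add, add_assoc]

theorem center_of_mass_three_equal_masses_on_medians_general (X₁ X₂ X₃ : ℍ) (w : ℝ)
    (hw : 0 < w)
    (M₁ M₂ M₃ : ℍ) (h₁ : HMidpoint X₂ X₃ M₁) (h₂ : HMidpoint X₁ X₃ M₂)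
    (h₃ : HMidpoint X₁ X₂ M₃) (C : ℍ) (c : ℝ)
    (h : IsSystemCentroid (n := 2) ![X₁, X₂, X₃] ![w, w, w] C c) :
    HBtw X₁ C M₁ ∧ HBtw X₂ C M₂ ∧ HBtw X₃ C M₃ := by
  have hc : 0 < c := h.mass_pos (by simp [Fin.forall_fin_succ, hw])
  have hsum := h.smul_toHyperboloid
  rw [Fin.sum_univ_three] at hsum
  simp only [Matrix.cons_val_zero, Matrix.cons_val_one, Matrix.cons_val] at hsum
  refine ⟨h₁.hBtw_of_smul_toHyperboloid_eq hw.le hw hc ?_,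
    h₂.hBtw_of_smul_toHyperboloid_eq hw.le hw hc ?_,
    h₃.hBtw_of_smul_toHyperboloid_eq hw.le hw hc ?_⟩ <;> rw [hsum] <;> abel

/-- Proposition 6.1: the center of mass of three equal point-masses at the vertices
of a hyperbolic triangle lies on each median, i.e. it is the medians' intersection. -/
theorem center_of_mass_three_equal_masses_on_medians (X₁ X₂ X₃ : ℍ) (w : ℝ)
    (hw : 0 < w)
    (hnc : ¬(HBtw X₁ X₂ X₃ ∨ HBtw X₂ X₁ X₃ ∨ HBtw X₁ X₃ X₂))
    (M₁ M₂ M₃ : ℍ) (h₁ : HMidpoint X₂ X₃ M₁) (h₂ : HMidpoint X₁ X₃ M₂)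
    (h₃ : HMidpoint X₁ X₂ M₃) (C : ℍ) (c : ℝ)
    (h : IsSystemCentroid (n := 2) ![X₁, X₂, X₃] ![w, w, w] C c) :
    HBtw X₁ C M₁ ∧ HBtw X₂ C M₂ ∧ HBtw X₃ C M₃ :=
  center_of_mass_three_equal_masses_on_medians_general X₁ X₂ X₃ w hw M₁ M₂ M₃ h₁ h₂ h₃ C c h
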